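/- arXiv:2510.16496 — 5 statements merged into one kernel-verified Lean document; each statement's English description precedes it below -/
import Mathlib

section
/- Let M ≥ 2, h > 0, ε > 0, and let G be the M×M tridiagonal matrix with G_{11} = G_{MM} = −1/h², G_{ii} = −2/h² for 2 ≤ i ≤ M−1, G_{i,i+1} = G_{i+1,i} = 1/h² for 1 ≤ i ≤ M−1, and all other entries zero, and let D_h = I_M ⊗ G + G ⊗ I_M ∈ ℝ^{M²×M²}. Then for every constant a > 0 and every u ∈ ℝ^{M²}, ‖(aI − ε²D_h) u‖_∞ ≥ a ‖u‖_∞. -/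
/-- The `M × M` tridiagonal matrix `G` with `G_{11} = G_{MM} = -1/h²`,
`G_{ii} = -2/h²` for interior `i`, and `G_{i,i+1} = G_{i+1,i} = 1/h²`. -/
noncomputable def Gmat (M : ℕ) (h : ℝ) : Matrix (Fin M) (Fin M) ℝ :=
  Matrix.of fun i j =>
    if (i : ℕ) = (j : ℕ) then
      (if (i : ℕ) = 0 ∨ (i : ℕ) = M - 1 then -1 / h ^ 2 else -2 / h ^ 2)
    else if (i : ℕ) + 1 = (j : ℕ) ∨ (j : ℕ) + 1 = (i : ℕ) then 1 / h ^ 2 else 0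

/-- The discrete Laplacian `D_h = I_M ⊗ G + G ⊗ I_M ∈ ℝ^{M²×M²}`. -/
noncomputable def Dh (M : ℕ) (h : ℝ) : Matrix (Fin M × Fin M) (Fin M × Fin M) ℝ :=
  Matrix.kroneckerMap (· * ·) (1 : Matrix (Fin M) (Fin M) ℝ) (Gmat M h) +
    Matrix.kroneckerMap (· * ·) (Gmat M h) (1 : Matrix (Fin M) (Fin M) ℝ)

/-!
`G`, and hence the Kronecker sum `D_h`, is a sub-Markov generator: its off-diagonal entries are
nonnegative and its row sums nonpositive. So `a • 1 - ε² • D_h` has nonpositive off-diagonal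
entries and row sums at least `a`, and the discrete maximum principle applied at an index where
`|u|` is largest gives the bound.
-/

open Matrix Kronecker

theorem Matrix.mul_norm_le_norm_mulVec {ι : Type*} [Fintype ι] {A : Matrix ι ι ℝ} {a : ℝ}
    (h_offDiag : ∀ i j, i ≠ j → A i j ≤ 0) (h_rowSum : ∀ i, a ≤ ∑ j, A i j) (u : ι → ℝ) :
    a * ‖u‖ ≤ ‖A *ᵥ u‖ := by
  rcases isEmpty_or_nonempty ι with _ | _
  · simp [Subsingleton.elim u 0]
  obtain ⟨i, hi⟩ := Finite.exists_max fun j => |u j|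
  have hnorm : ‖u‖ = |u i| :=
    le_antisymm ((pi_norm_le_iff_of_nonneg (abs_nonneg _)).2 hi) (norm_le_pi_norm u i)
  set c := |u i|
  rcases (abs_nonneg (u i) : 0 ≤ c).eq_or_lt with hc | hc
  · rw [hnorm, show c = 0 from hc.symm, mul_zero]; exact norm_nonneg _
  -- Test row `i` against `u i`: since `u i * u j ≤ c ^ 2` and `A i j ≤ 0` off the diagonal,
  -- `u i * (A *ᵥ u) i` is at least `c ^ 2` times the row sum.
  have hterm : ∀ j, A i j * (c * c) ≤ A i j * (u i * u j) := by
    intro j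
    rcases eq_or_ne i j with rfl | hij
    · rw [abs_mul_abs_self]
    · refine mul_le_mul_of_nonpos_left ?_ (h_offDiag i j hij)
      calc u i * u j ≤ |u i| * |u j| := by rw [← abs_mul]; exact le_abs_self _
        _ ≤ c * c := mul_le_mul_of_nonneg_left (hi j) hc.le
  have hscaled : a * ‖u‖ * c ≤ ‖A *ᵥ u‖ * c := calc
    a * ‖u‖ * c = a * (c * c) := by rw [hnorm, mul_assoc]
    _ ≤ (∑ j, A i j) * (c * c) := mul_le_mul_of_nonneg_right (h_rowSum i) (by positivity)
    _ ≤ ∑ j, A i j * (u i * u j) := by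
      rw [Finset.sum_mul]; exact Finset.sum_le_sum fun j _ => hterm j
    _ = u i * (A *ᵥ u) i := by
      simp only [mulVec, dotProduct, Finset.mul_sum]; congr 1; ext j; ring
    _ ≤ c * ‖A *ᵥ u‖ := by
      refine (le_abs_self _).trans ?_
      rw [abs_mul, ← Real.norm_eq_abs ((A *ᵥ u) i)]
      exact mul_le_mul_of_nonneg_left (norm_le_pi_norm _ i) hc.le
    _ = ‖A *ᵥ u‖ * c := mul_comm _ _
  exact le_of_mul_le_mul_right hscaled hc

structure Matrix.IsSubgenerator {ι : Type*} [Fintype ι] (L : Matrix ι ι ℝ) : Prop where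
  offDiag_nonneg : ∀ i j, i ≠ j → 0 ≤ L i j
  sum_row_nonpos : ∀ i, ∑ j, L i j ≤ 0

theorem Matrix.sum_kronecker_row {m n α : Type*} [Fintype m] [Fintype n]
    [NonUnitalNonAssocSemiring α] (A : Matrix m m α) (B : Matrix n n α) (x : m × n) :
    ∑ y, (A ⊗ₖ B) x y = (∑ j, A x.1 j) * ∑ j, B x.2 j := by
  rw [Fintype.sum_prod_type, Finset.sum_mul_sum]; rfl

namespace Matrix.IsSubgenerator

variable {m n : Type*} [Fintype m] [Fintype n] [DecidableEq m] [DecidableEq n]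

theorem mul_norm_le_norm_smul_one_sub_smul_mulVec {L : Matrix n n ℝ} (hL : L.IsSubgenerator)
    {t : ℝ} (ht : 0 ≤ t) (a : ℝ) (u : n → ℝ) : a * ‖u‖ ≤ ‖(a • 1 - t • L) *ᵥ u‖ := by
  refine Matrix.mul_norm_le_norm_mulVec (fun i j hij => ?_) (fun i => ?_) u
  · simpa [one_apply_ne hij] using mul_nonneg ht (hL.offDiag_nonneg i j hij)
  · simp only [sub_apply, smul_apply, smul_eq_mul, Finset.sum_sub_distrib, ← Finset.mul_sum,
      one_apply, Finset.sum_ite_eq, Finset.mem_univ, if_true, mul_one]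
    linarith [mul_nonpos_of_nonneg_of_nonpos ht (hL.sum_row_nonpos i)]

theorem one_kronecker_add_kronecker_one {A : Matrix n n ℝ} {B : Matrix m m ℝ}
    (hA : A.IsSubgenerator) (hB : B.IsSubgenerator) :
    (1 ⊗ₖ A + B ⊗ₖ 1 : Matrix (m × n) (m × n) ℝ).IsSubgenerator where
  offDiag_nonneg := by
    rintro ⟨x₁, x₂⟩ ⟨y₁, y₂⟩ hxy
    rw [add_apply, kronecker_apply, kronecker_apply]
    refine add_nonneg ?_ ?_
    · rcases eq_or_ne x₁ y₁ with rfl | h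
      · simpa using hA.offDiag_nonneg _ _ fun h' => hxy (by rw [h'])
      · simp [one_apply_ne h]
    · rcases eq_or_ne x₂ y₂ with rfl | h
      · simpa using hB.offDiag_nonneg _ _ fun h' => hxy (by rw [h'])
      · simp [one_apply_ne h]
  sum_row_nonpos x := by
    simp only [add_apply, Finset.sum_add_distrib, sum_kronecker_row, one_apply,
      Finset.sum_ite_eq, Finset.mem_univ, if_true, one_mul, mul_one]
    exact add_nonpos (hA.sum_row_nonpos _) (hB.sum_row_nonpos _)

end Matrix.IsSubgenerator

theorem Gmat_nonneg_of_ne (M : ℕ) (h : ℝ) {i j : Fin M} (hij : i ≠ j) : 0 ≤ Gmat M h i j := by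
  simp only [Gmat, Matrix.of_apply, Fin.val_eq_val, hij, if_false]
  split_ifs <;> positivity

theorem sum_Gmat_row_nonpos (M : ℕ) (h : ℝ) (i : Fin M) : ∑ j, Gmat M h i j ≤ 0 := by
  let g : ℕ → ℝ := fun k =>
    (if (i : ℕ) = k then (if (i : ℕ) = 0 ∨ (i : ℕ) = M - 1 then -1 else -2) * (h ^ 2)⁻¹ else 0)
      + (if (i : ℕ) + 1 = k then (h ^ 2)⁻¹ else 0) + (if k + 1 = i then (h ^ 2)⁻¹ else 0)
  have hg : ∀ j : Fin M, Gmat M h i j = g j := by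
    intro j; simp only [Gmat, Matrix.of_apply, g]; split_ifs <;> first | omega | ring
  have hc : 0 ≤ (h ^ 2)⁻¹ := by positivity
  -- Over `range M` each of the three indicator sums collapses by `sum_ite_eq`.
  rw [Fintype.sum_congr _ _ hg, Fin.sum_univ_eq_sum_range g]
  simp only [g, Finset.sum_add_distrib, Finset.sum_ite_eq, Finset.mem_range, i.isLt, if_true]
  obtain ⟨_ | p, hi⟩ := i <;>
    simp only [Nat.add_right_cancel_iff, Nat.add_eq_zero_iff, one_ne_zero, and_false, false_or,
      if_false, Finset.sum_const_zero, Finset.sum_ite_eq', Finset.mem_range] <;>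
    split_ifs <;> first | omega | linarith

theorem isSubgenerator_Gmat (M : ℕ) (h : ℝ) : (Gmat M h).IsSubgenerator :=
  ⟨fun _ _ => Gmat_nonneg_of_ne M h, sum_Gmat_row_nonpos M h⟩

theorem isSubgenerator_Dh (M : ℕ) (h : ℝ) : (Dh M h).IsSubgenerator :=
  (isSubgenerator_Gmat M h).one_kronecker_add_kronecker_one (isSubgenerator_Gmat M h)

theorem stmt4_general (M : ℕ) (h ε : ℝ)
    (a : ℝ) (u : Fin M × Fin M → ℝ) :
    a * ‖u‖ ≤
      ‖(a • (1 : Matrix (Fin M × Fin M) (Fin M × Fin M) ℝ) - ε ^ 2 • Dh M h).mulVec u‖ :=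
  (isSubgenerator_Dh M h).mul_norm_le_norm_smul_one_sub_smul_mulVec (sq_nonneg ε) a u

/-- For every `a > 0` and every `u ∈ ℝ^{M²}`, `‖(aI - ε²D_h) u‖_∞ ≥ a ‖u‖_∞`
(the norm on `Fin M × Fin M → ℝ` is the sup norm). -/
theorem stmt4 (M : ℕ) (hM : 2 ≤ M) (h ε : ℝ) (hh : 0 < h) (hε : 0 < ε)
    (a : ℝ) (ha : 0 < a) (u : Fin M × Fin M → ℝ) :
    a * ‖u‖ ≤
      ‖(a • (1 : Matrix (Fin M × Fin M) (Fin M × Fin M) ℝ) - ε ^ 2 • Dh M h).mulVec u‖ :=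
  stmt4_general M h ε a u
end

section
/- Let {a^{(n)}_j : 0 ≤ j ≤ n ≤ N−1} be real kernels satisfying a^{(n)}_0 ≥ a^{(n)}_1 ≥ ⋯ ≥ a^{(n)}_n > 0 for every 0 ≤ n ≤ N−1. Then the associated DCC kernels are nonnegative: p^{(n)}_{n−k} ≥ 0 for all 0 ≤ k ≤ n ≤ N−1. -/
/-!
Summing the DOC recurrence over the rows gives the complementary identity
`∑_{j=k}^n p^{(n)}_{n-j} a^{(j)}_{j-k} = 1` for every `k ≤ n`. Subtracting the identities for
`k + 1` and `k` isolates the diagonal term: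
`p^{(n)}_{n-k} a^{(k)}_0 = ∑_{j=k+1}^n p^{(n)}_{n-j} (a^{(j)}_{j-k-1} - a^{(j)}_{j-k})`.
The kernels decrease in the lag, so the brackets are nonnegative and `a^{(k)}_0 > 0`;
nonnegativity of `p^{(n)}_{n-k}` follows by downward induction on `k`.
-/

open Finset

theorem apply_le_apply_zero_of_succ_le {α : Type*} [Preorder α] {f : ℕ → α} {n : ℕ}
    (hf : ∀ j < n, f (j + 1) ≤ f j) : f n ≤ f 0 := by
  induction n with
  | zero => exact le_rfl
  | succ n ih => exact (hf n n.lt_succ_self).trans (ih fun j hj => hf j (hj.trans n.lt_succ_self))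

section DOC

variable {a θ p : ℕ → ℕ → ℝ}
  (hθ0 : ∀ n, θ n n = 1 / a n 0)
  (hθ : ∀ n k, k < n → θ n k = -(1 / a k 0) * ∑ j ∈ Icc (k + 1) n, θ n j * a j (j - k))
  (hp : ∀ n k, p n k = ∑ j ∈ Icc k n, θ j k)

include hθ0 hθ

theorem doc_orthogonality {n k : ℕ} (hkn : k ≤ n) (ha : a k 0 ≠ 0) :
    ∑ j ∈ Icc k n, θ n j * a j (j - k) = if k = n then 1 else 0 := by
  rw [Icc_eq_cons_Ioc hkn, sum_cons, Nat.sub_self]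
  rcases hkn.eq_or_lt with rfl | hlt
  · simp [hθ0, ha]
  · rw [if_neg hlt.ne, ← Icc_add_one_left_eq_Ioc, hθ n k hlt]
    field_simp
    ring

include hp

theorem dcc_orthogonality {n k : ℕ} (hkn : k ≤ n) (ha : a k 0 ≠ 0) :
    ∑ j ∈ Icc k n, p n j * a j (j - k) = 1 := calc
  ∑ j ∈ Icc k n, p n j * a j (j - k)
      = ∑ j ∈ Icc k n, ∑ i ∈ Icc j n, θ i j * a j (j - k) := by
        simp only [hp, sum_mul]
  _ = ∑ i ∈ Icc k n, ∑ j ∈ Icc k i, θ i j * a j (j - k) :=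
        sum_comm' fun j i => by simp only [mem_Icc]; omega
  _ = ∑ i ∈ Icc k n, if k = i then 1 else 0 :=
        sum_congr rfl fun i hi => doc_orthogonality hθ0 hθ (mem_Icc.1 hi).1 ha
  _ = 1 := by rw [sum_ite_eq, if_pos (mem_Icc.2 ⟨le_rfl, hkn⟩)]

theorem dcc_mul_eq_sum_mul_sub {n k : ℕ} (hkn : k < n) (ha : a k 0 ≠ 0) (ha' : a (k + 1) 0 ≠ 0) :
    p n k * a k 0 = ∑ j ∈ Icc (k + 1) n, p n j * (a j (j - (k + 1)) - a j (j - k)) := by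
  have hk := dcc_orthogonality hθ0 hθ hp hkn.le ha
  have hk' := dcc_orthogonality hθ0 hθ hp hkn ha'
  rw [Icc_eq_cons_Ioc hkn.le, sum_cons, ← Icc_add_one_left_eq_Ioc, Nat.sub_self] at hk
  simp only [mul_sub, sum_sub_distrib]
  linarith

theorem dcc_nonneg {n : ℕ} (hpos : ∀ j ≤ n, 0 < a j j)
    (hmono : ∀ j ≤ n, ∀ i < j, a j (i + 1) ≤ a j i) {k : ℕ} (hkn : k ≤ n) : 0 ≤ p n k := by
  have ha0 : ∀ j ≤ n, 0 < a j 0 := fun j hj =>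
    (hpos j hj).trans_le (apply_le_apply_zero_of_succ_le (hmono j hj))
  suffices ∀ m ∈ Icc k n, 0 ≤ p n m from this k (mem_Icc.2 ⟨le_rfl, hkn⟩)
  induction hkn using Nat.decreasingInduction with
  | self =>
    intro m hm
    obtain rfl : m = n := by simpa using hm
    rw [hp, Icc_self, sum_singleton, hθ0]
    exact (one_div_pos.2 (ha0 m le_rfl)).le
  | of_succ k hkn ih =>
    intro m hm
    rcases (mem_Icc.1 hm).1.eq_or_lt with rfl | hlt
    · have hdiag := dcc_mul_eq_sum_mul_sub hθ0 hθ hp hkn (ha0 k hkn.le).ne' (ha0 (k + 1) hkn).ne'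
      refine nonneg_of_mul_nonneg_left (hdiag ▸ sum_nonneg fun j hj => ?_) (ha0 k hkn.le)
      obtain ⟨hkj, hjn⟩ := mem_Icc.1 hj
      have hlag : j - (k + 1) + 1 = j - k := by omega
      refine mul_nonneg (ih j hj) (sub_nonneg.2 ?_)
      simpa only [hlag] using hmono j hjn (j - (k + 1)) (by omega)
    · exact ih m (mem_Icc.2 ⟨hlt, (mem_Icc.1 hm).2⟩)

end DOC

theorem stmt6_general (N : ℕ) (a : ℕ → ℕ → ℝ)
    (hpos : ∀ n, n ≤ N - 1 → 0 < a n n)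
    (hmono : ∀ n, n ≤ N - 1 → ∀ j, j < n → a n (j + 1) ≤ a n j)
    (θ : ℕ → ℕ → ℝ)
    (hθ0 : ∀ n, θ n n = 1 / a n 0)
    (hθ : ∀ n k, k < n →
      θ n k = -(1 / a k 0) * ∑ j ∈ Finset.Icc (k + 1) n, θ n j * a j (j - k))
    (p : ℕ → ℕ → ℝ)
    (hp : ∀ n k, p n k = ∑ j ∈ Finset.Icc k n, θ j k) :
    ∀ n k, n ≤ N - 1 → k ≤ n → 0 ≤ p n k :=
  fun _ _ hn hkn => dcc_nonneg hθ0 hθ hp (fun j hj => hpos j (hj.trans hn))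
    (fun j hj => hmono j (hj.trans hn)) hkn

/-- If the kernels satisfy `a^{(n)}_0 ≥ a^{(n)}_1 ≥ ⋯ ≥ a^{(n)}_n > 0`, then the associated
DCC kernels are nonnegative: `p^{(n)}_{n-k} ≥ 0` for all `0 ≤ k ≤ n ≤ N-1`.
Here `a n j = a^{(n)}_j` (lag-indexed), `θ n k = θ^{(n)}_{n-k}` are the DOC kernels and
`p n k = p^{(n)}_{n-k}` are the DCC kernels. -/
theorem stmt6 (N : ℕ) (hN : 1 ≤ N) (a : ℕ → ℕ → ℝ)
    (hpos : ∀ n, n ≤ N - 1 → 0 < a n n)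
    (hmono : ∀ n, n ≤ N - 1 → ∀ j, j < n → a n (j + 1) ≤ a n j)
    (θ : ℕ → ℕ → ℝ)
    (hθ0 : ∀ n, θ n n = 1 / a n 0)
    (hθ : ∀ n k, k < n →
      θ n k = -(1 / a k 0) * ∑ j ∈ Finset.Icc (k + 1) n, θ n j * a j (j - k))
    (p : ℕ → ℕ → ℝ)
    (hp : ∀ n k, p n k = ∑ j ∈ Finset.Icc k n, θ j k) :
    ∀ n k, n ≤ N - 1 → k ≤ n → 0 ≤ p n k :=
  stmt6_general N a hpos hmono θ hθ0 hθ p hp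
end

section
/- Let 0 < α < 1, let 0 = t_0 < t_1 < ⋯ < t_N = T be a temporal mesh with step sizes τ_n = t_n − t_{n−1}, let a^{(n)}_{n−k} be the L1 kernels and p^{(n)}_{n−k} the associated DCC kernels. Then for every 0 ≤ n ≤ N−1 and every real sequence ψ^0, ψ^1, …, ψ^n: 2 ψ^n Σ_{k=0}^n a^{(n)}_{n−k} ψ^k ≥ a^{(n)}_0 |ψ^n|² + Σ_{k=0}^n p^{(n)}_{n−k} (Σ_{j=0}^k a^{(k)}_{k−j} ψ^j)² − Σ_{k=0}^{n−1} p^{(n−1)}_{n−1−k} (Σ_{j=0}^k a^{(k)}_{k−j} ψ^j)², with the convention that the last sum is 0 when n = 0. -/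
/-- The L1 discrete convolution kernel, indexed by the lag: `L1kernel α t n j = a^{(n)}_j`,
so that `a^{(n)}_{n-k} = L1kernel α t n (n - k)` equals
`(1/(Γ(1-α) τ_{k+1})) ∫_{t_k}^{t_{k+1}} (t_{n+1} - s)^{-α} ds`. -/
noncomputable def L1kernel (α : ℝ) (t : ℕ → ℝ) (n j : ℕ) : ℝ :=
  (1 / (Real.Gamma (1 - α) * (t (n - j + 1) - t (n - j)))) *
    ∫ s in (t (n - j))..(t (n - j + 1)), (t (n + 1) - s) ^ (-α)

/-!
Write `A` for the lower-triangular matrix of L1 kernels, `θ = A⁻¹` for the DOC kernels and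
`Lᵏ = (Aψ)ᵏ`. Then `ψⁿ = Σₖ θ⁽ⁿ⁾ₙ₋ₖ Lᵏ`, and the two DCC sums differ by `Σₖ θ⁽ⁿ⁾ₙ₋ₖ (Lᵏ)²`.
Completing the square with `θ⁽ⁿ⁾₀ a⁽ⁿ⁾₀ = 1`, the claim becomes
`a⁽ⁿ⁾₀ (Σ_{k<n} θ⁽ⁿ⁾ₙ₋ₖ Lᵏ)² ≤ -Σ_{k<n} θ⁽ⁿ⁾ₙ₋ₖ (Lᵏ)²`, which is Cauchy–Schwarz for the weights
`-θ⁽ⁿ⁾ₙ₋ₖ ≥ 0` (`k < n`), whose total is at most `θ⁽ⁿ⁾₀` because the row sums of `θ` are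
nonnegative. Both sign facts are read off `Aθ = 1`: the off-diagonal DOC kernels are nonpositive
because the ratio `a⁽ⁿ⁺¹⁾ₙ₊₁₋ⱼ / a⁽ⁿ⁾ₙ₋ⱼ` decreases in `j` (a rearrangement inequality for the
kernel `(t - s)^(-α)` over two adjacent cells), and the row sums are nonnegative because
`a⁽ⁿ⁾ₙ₋ₖ` decreases in `n`.
-/

open Finset

lemma sum_range_sum_range_succ_eq_sum_range_sum_Icc {β : Type*} [AddCommMonoid β] (m : ℕ)
    (f : ℕ → ℕ → β) :
    ∑ k ∈ range (m + 1), ∑ j ∈ range (k + 1), f k j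
      = ∑ j ∈ range (m + 1), ∑ k ∈ Icc j m, f k j :=
  sum_comm' fun k j => by simp only [mem_range, mem_Icc]; omega

lemma mul_sq_add_weighted_sum_sq_le {ι : Type*} (s : Finset ι) {a d x ψ : ℝ} {c L : ι → ℝ}
    (ha : 0 < a) (hda : d * a = 1) (hc : ∀ i ∈ s, c i ≤ 0) (hsum : 0 ≤ d + ∑ i ∈ s, c i)
    (hψ : ψ = d * x + ∑ i ∈ s, c i * L i) :
    a * ψ ^ 2 + (d * x ^ 2 + ∑ i ∈ s, c i * L i ^ 2) ≤ 2 * ψ * x := by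
  set S := ∑ i ∈ s, c i * L i
  set W := ∑ i ∈ s, -c i
  set V := ∑ i ∈ s, -c i * L i ^ 2
  have hV : 0 ≤ V := sum_nonneg fun i hi => mul_nonneg (neg_nonneg.mpr (hc i hi)) (sq_nonneg _)
  have hCS : S ^ 2 ≤ W * V :=
    sum_sq_le_sum_mul_sum_of_sq_le_mul s (fun i hi => neg_nonneg.mpr (hc i hi))
      (fun i hi => mul_nonneg (neg_nonneg.mpr (hc i hi)) (sq_nonneg _))
      (fun i _ => (by ring : _ = _).le)
  have hWd : W ≤ d := by simp only [W, sum_neg_distrib]; linarith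
  have hkey : a * S ^ 2 ≤ V := calc
    a * S ^ 2 ≤ a * W * V := by rw [mul_assoc]; exact mul_le_mul_of_nonneg_left hCS ha.le
    _ ≤ a * d * V := by gcongr
    _ = V := by rw [mul_comm a d, hda, one_mul]
  have hVsum : ∑ i ∈ s, c i * L i ^ 2 = -V := by simp only [V, neg_mul, sum_neg_distrib, neg_neg]
  -- with `ψ = d x + S` and `d a = 1` the defect is exactly `V - a S²`
  rw [hVsum, hψ]
  linear_combination hkey + (x ^ 2 * d + 2 * x * S) * hda

lemma sum_colSum_mul_sub_sum_colSum_mul (θ : ℕ → ℕ → ℝ) (X : ℕ → ℝ) (n : ℕ) :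
    ∑ k ∈ range (n + 1), (∑ j ∈ Icc k n, θ j k) * X k
      - ∑ k ∈ range n, (∑ j ∈ Icc k (n - 1), θ j k) * X k
      = ∑ k ∈ range (n + 1), θ n k * X k := by
  rcases n with _ | n
  · simp
  · have hcol : ∀ k ∈ range (n + 1),
        ∑ j ∈ Icc k (n + 1), θ j k = ∑ j ∈ Icc k n, θ j k + θ (n + 1) k :=
      fun k hk => sum_Icc_succ_top (by have := mem_range.mp hk; omega) _
    rw [sum_range_succ, sum_congr rfl fun k hk => by rw [hcol k hk],
      sum_range_succ (fun k => θ (n + 1) k * X k)]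
    simp only [add_mul, sum_add_distrib, Icc_self, sum_singleton, Nat.add_sub_cancel]
    ring

-- `A m k` stands for `a⁽ᵐ⁾ₘ₋ₖ` and `θ n j` for `θ⁽ⁿ⁾ₙ₋ⱼ`: arrays are indexed by row and column,
-- not by lag.
def IsTriangularLeftInverse (M : ℕ) (θ A : ℕ → ℕ → ℝ) : Prop :=
  ∀ n k, k ≤ n → n ≤ M → ∑ j ∈ Icc k n, θ n j * A j k = if k = n then 1 else 0

def lowerTriangularMatrix (M : ℕ) (A : ℕ → ℕ → ℝ) : Matrix (Fin (M + 1)) (Fin (M + 1)) ℝ :=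
  Matrix.of fun i j => if (j : ℕ) ≤ i then A i j else 0

lemma lowerTriangularMatrix_mul_apply (M : ℕ) (θ A : ℕ → ℕ → ℝ) (i k : Fin (M + 1)) :
    (lowerTriangularMatrix M θ * lowerTriangularMatrix M A) i k
      = ∑ j ∈ Icc (k : ℕ) i, θ i j * A j k := by
  rw [Matrix.mul_apply]
  simp only [lowerTriangularMatrix, Matrix.of_apply, ite_zero_mul_ite_zero]
  rw [Fin.sum_univ_eq_sum_range (fun j => if j ≤ (i : ℕ) ∧ (k : ℕ) ≤ j then θ i j * A j k else 0),
    ← sum_filter]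
  congr 1
  ext j
  simp only [mem_filter, mem_range, mem_Icc]
  omega

lemma isTriangularLeftInverse_iff_mul_eq_one {M : ℕ} {θ A : ℕ → ℕ → ℝ} :
    IsTriangularLeftInverse M θ A ↔ lowerTriangularMatrix M θ * lowerTriangularMatrix M A = 1 := by
  constructor
  · intro h
    ext i k
    rw [lowerTriangularMatrix_mul_apply, Matrix.one_apply]
    rcases le_or_gt (k : ℕ) i with hki | hik
    · simp [h i k hki (Nat.lt_succ_iff.mp i.2), Fin.ext_iff, eq_comm]
    · rw [Icc_eq_empty_of_lt hik, sum_empty, if_neg (fun hik' => hik.ne (by rw [hik']))]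
  · intro h n k hkn hn
    have := congr_fun (congr_fun h ⟨n, by omega⟩) ⟨k, by omega⟩
    rw [lowerTriangularMatrix_mul_apply, Matrix.one_apply] at this
    simpa [Fin.ext_iff, eq_comm] using this

lemma isTriangularLeftInverse_of_recursion {M : ℕ} {θ A : ℕ → ℕ → ℝ}
    (hA : ∀ k ≤ M, A k k ≠ 0) (hdiag : ∀ n, θ n n = 1 / A n n)
    (hrec : ∀ n k, k < n → θ n k = -(1 / A k k) * ∑ j ∈ Icc (k + 1) n, θ n j * A j k) :
    IsTriangularLeftInverse M θ A := by
  intro n k hkn hn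
  rcases hkn.eq_or_lt with rfl | hlt
  · simp [hdiag, hA k hn]
  · rw [← insert_Icc_add_one_left_eq_Icc hlt.le, sum_insert (by simp), hrec n k hlt, if_neg hlt.ne]
    field_simp [hA k (by omega)]
    ring

namespace IsTriangularLeftInverse

variable {M : ℕ} {θ A : ℕ → ℕ → ℝ}

lemma symm (h : IsTriangularLeftInverse M θ A) : IsTriangularLeftInverse M A θ :=
  isTriangularLeftInverse_iff_mul_eq_one.mpr
    (mul_eq_one_comm.mp (isTriangularLeftInverse_iff_mul_eq_one.mp h))

lemma mul_diag (h : IsTriangularLeftInverse M θ A) {n : ℕ} (hn : n ≤ M) :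
    θ n n * A n n = 1 := by
  simpa using h n n le_rfl hn

lemma sum_mul_sum_mul_eq_self (h : IsTriangularLeftInverse M θ A) {n : ℕ} (hn : n ≤ M)
    (ψ : ℕ → ℝ) :
    ∑ k ∈ range (n + 1), θ n k * ∑ j ∈ range (k + 1), A k j * ψ j = ψ n := by
  simp_rw [mul_sum]
  rw [sum_range_sum_range_succ_eq_sum_range_sum_Icc]
  have hrow : ∀ j ∈ range (n + 1), ∑ k ∈ Icc j n, θ n k * (A k j * ψ j)
      = if j = n then ψ j else 0 := fun j hj => by
    simp_rw [← mul_assoc, ← sum_mul, h n j (Nat.lt_succ_iff.mp (mem_range.mp hj)) hn]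
    split_ifs <;> simp
  rw [sum_congr rfl hrow, sum_ite_eq', if_pos (self_mem_range_succ n)]

lemma nonpos_of_antitoneOn_ratio (h : IsTriangularLeftInverse M θ A)
    (hpos : ∀ m k, k ≤ m → m ≤ M → 0 < A m k)
    (hratio : ∀ m, m + 1 ≤ M → AntitoneOn (fun j => A (m + 1) j / A m j) (Set.Iic m)) :
    ∀ n ≤ M, ∀ k < n, θ n k ≤ 0 := by
  have h' := h.symm
  intro n
  induction n using Nat.strong_induction_on with
  | _ n ih =>
  intro hn k hk
  obtain ⟨m, rfl⟩ : ∃ m, n = m + 1 := ⟨n - 1, by omega⟩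
  have hrow : A (m + 1) (m + 1) * θ (m + 1) k = -∑ j ∈ Icc k m, A (m + 1) j * θ j k := by
    have := h' (m + 1) k hk.le hn
    rw [if_neg hk.ne, sum_Icc_succ_top (by omega : k ≤ m + 1)] at this
    linarith
  have hprev := h' m k (by omega) (by omega)
  -- subtracting `c` times row `m` of `A θ = 1` from row `m + 1` leaves terms of one sign
  set c := A (m + 1) k / A m k
  have hc : 0 ≤ c := (div_pos (hpos _ _ (by omega) hn) (hpos _ _ (by omega) (by omega))).le
  have hterm : ∀ j ∈ Icc k m, 0 ≤ (A (m + 1) j - c * A m j) * θ j k := by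
    intro j hj
    rw [mem_Icc] at hj
    rcases hj.1.eq_or_lt with rfl | hkj
    · rw [div_mul_cancel₀ _ (hpos m k hj.2 (by omega)).ne', sub_self, zero_mul]
    · have hAmj := hpos m j hj.2 (by omega)
      have hle : A (m + 1) j / A m j ≤ c :=
        hratio m hn (Set.mem_Iic.mpr (by omega)) (Set.mem_Iic.mpr hj.2) hkj.le
      rw [div_le_iff₀ hAmj] at hle
      exact mul_nonneg_of_nonpos_of_nonpos (by linarith) (ih j (by omega) (by omega) k hkj)
  have hsplit : A (m + 1) (m + 1) * θ (m + 1) k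
      = -∑ j ∈ Icc k m, (A (m + 1) j - c * A m j) * θ j k - c * if k = m then 1 else 0 := by
    rw [hrow, ← hprev]
    simp only [sub_mul, sum_sub_distrib, mul_sum, mul_assoc]
    ring
  have hrhs : A (m + 1) (m + 1) * θ (m + 1) k ≤ 0 := by
    rw [hsplit]
    have hsum := sum_nonneg hterm
    have hcorr : 0 ≤ c * if k = m then (1 : ℝ) else 0 := mul_nonneg hc (by split_ifs <;> norm_num)
    linarith
  exact nonpos_of_mul_nonpos_right hrhs (hpos _ _ le_rfl hn)

lemma sum_mul_rowSum_eq_one (h : IsTriangularLeftInverse M θ A) {m : ℕ} (hm : m ≤ M) :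
    ∑ k ∈ range (m + 1), A m k * ∑ j ∈ range (k + 1), θ k j = 1 := by
  simpa [sum_ite_eq'] using h.symm.sum_mul_sum_mul_eq_self hm (fun _ => 1)

lemma rowSum_nonneg (h : IsTriangularLeftInverse M θ A)
    (hpos : ∀ m k, k ≤ m → m ≤ M → 0 < A m k)
    (hanti : ∀ m k, k ≤ m → m + 1 ≤ M → A (m + 1) k ≤ A m k) :
    ∀ m ≤ M, 0 ≤ ∑ j ∈ range (m + 1), θ m j := by
  intro m
  induction m using Nat.strong_induction_on with
  | _ m ih =>
  intro hm
  have hlower : ∑ k ∈ range m, A m k * ∑ j ∈ range (k + 1), θ k j ≤ 1 := by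
    rcases m with _ | m
    · simp
    · calc ∑ k ∈ range (m + 1), A (m + 1) k * ∑ j ∈ range (k + 1), θ k j
          ≤ ∑ k ∈ range (m + 1), A m k * ∑ j ∈ range (k + 1), θ k j := by
            refine sum_le_sum fun k hk => ?_
            have hk := mem_range.mp hk
            exact mul_le_mul_of_nonneg_right (hanti m k (by omega) hm) (ih k (by omega) (by omega))
        _ = 1 := h.sum_mul_rowSum_eq_one (by omega)
  have hrow := h.sum_mul_rowSum_eq_one hm
  rw [sum_range_succ] at hrow
  exact nonneg_of_mul_nonneg_right (by linarith) (hpos m m le_rfl hm)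

theorem quadratic_le {p : ℕ → ℕ → ℝ} (h : IsTriangularLeftInverse M θ A) {n : ℕ} (hn : n ≤ M) (hA : 0 < A n n)
    (hθ : ∀ k < n, θ n k ≤ 0) (hrow : 0 ≤ ∑ k ∈ range (n + 1), θ n k)
    (hp : ∀ n k, p n k = ∑ j ∈ Icc k n, θ j k) (ψ : ℕ → ℝ) :
    A n n * (ψ n) ^ 2
      + ∑ k ∈ range (n + 1), p n k * (∑ j ∈ range (k + 1), A k j * ψ j) ^ 2
      - ∑ k ∈ range n, p (n - 1) k * (∑ j ∈ range (k + 1), A k j * ψ j) ^ 2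
      ≤ 2 * ψ n * ∑ k ∈ range (n + 1), A n k * ψ k := by
  set L := fun k => ∑ j ∈ range (k + 1), A k j * ψ j
  have hψ : ψ n = θ n n * L n + ∑ k ∈ range n, θ n k * L k := by
    rw [← h.sum_mul_sum_mul_eq_self hn ψ, sum_range_succ, add_comm]
  have hdcc := sum_colSum_mul_sub_sum_colSum_mul θ (fun k => L k ^ 2) n
  simp only [← hp] at hdcc
  rw [add_sub_assoc, hdcc, sum_range_succ, add_comm (∑ k ∈ range n, _)]
  rw [sum_range_succ, add_comm] at hrow
  have := mul_sq_add_weighted_sum_sq_le (range n) hA (h.mul_diag hn)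
    (fun k hk => hθ k (mem_range.mp hk)) hrow hψ
  linarith

end IsTriangularLeftInverse

section L1kernelProperties

open MeasureTheory intervalIntegral

variable {α : ℝ}

lemma intervalIntegrable_sub_rpow_neg (hα1 : α < 1) (w a b : ℝ) :
    IntervalIntegrable (fun s => (w - s) ^ (-α)) volume a b := by
  simpa using (intervalIntegrable_rpow' (a := w - a) (b := w - b)
    (by linarith : (-1 : ℝ) < -α)).comp_sub_left w

lemma sub_rpow_neg_mul_sub_rpow_neg_le (hα0 : 0 ≤ α) {s σ u v : ℝ} (hsσ : s ≤ σ) (hσu : σ < u)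
    (huv : u ≤ v) :
    (u - s) ^ (-α) * (v - σ) ^ (-α) ≤ (v - s) ^ (-α) * (u - σ) ^ (-α) := by
  rw [← Real.mul_rpow (by linarith) (by linarith), ← Real.mul_rpow (by linarith) (by linarith)]
  exact Real.rpow_le_rpow_of_nonpos (by nlinarith) (by nlinarith) (by linarith)

lemma integral_sub_rpow_neg_mul_le (hα0 : 0 ≤ α) (hα1 : α < 1) {a b c u v : ℝ} (hab : a ≤ b)
    (hbc : b ≤ c) (hcu : c ≤ u) (huv : u ≤ v) :
    (∫ s in a..b, (u - s) ^ (-α)) * (∫ σ in b..c, (v - σ) ^ (-α))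
      ≤ (∫ s in a..b, (v - s) ^ (-α)) * ∫ σ in b..c, (u - σ) ^ (-α) := by
  have hint := intervalIntegrable_sub_rpow_neg hα1
  rw [← intervalIntegral.integral_mul_const, ← intervalIntegral.integral_mul_const]
  refine integral_mono_on_of_le_Ioo hab ((hint _ _ _).mul_const _)
    ((hint _ _ _).mul_const _) fun s hs => ?_
  rw [← intervalIntegral.integral_const_mul, ← intervalIntegral.integral_const_mul]
  refine integral_mono_on_of_le_Ioo hbc ((hint _ _ _).const_mul _)
    ((hint _ _ _).const_mul _) fun σ hσ => ?_
  exact sub_rpow_neg_mul_sub_rpow_neg_le hα0 (by linarith [hs.2, hσ.1]) (by linarith [hσ.2]) huv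

variable {t : ℕ → ℝ} {N m n k : ℕ}

lemma mesh_lt (ht : StrictMonoOn t (Set.Iic N)) {i j : ℕ} (hij : i < j) (hj : j ≤ N) :
    t i < t j :=
  ht (Set.mem_Iic.mpr (by omega)) (Set.mem_Iic.mpr hj) hij

lemma mesh_le (ht : StrictMonoOn t (Set.Iic N)) {i j : ℕ} (hij : i ≤ j) (hj : j ≤ N) :
    t i ≤ t j :=
  ht.monotoneOn (Set.mem_Iic.mpr (by omega)) (Set.mem_Iic.mpr hj) hij

lemma L1kernel_sub_eq (hk : k ≤ m) :
    L1kernel α t m (m - k) = 1 / (Real.Gamma (1 - α) * (t (k + 1) - t k)) *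
      ∫ s in t k..t (k + 1), (t (m + 1) - s) ^ (-α) := by
  rw [L1kernel, Nat.sub_sub_self hk]

lemma L1kernel_sub_pos (hα1 : α < 1) (ht : StrictMonoOn t (Set.Iic N)) (hk : k ≤ m)
    (hm : m < N) :
    0 < L1kernel α t m (m - k) := by
  have hτ : t k < t (k + 1) := mesh_lt ht (Nat.lt_succ_self k) (by omega)
  have htop : t (k + 1) ≤ t (m + 1) := mesh_le ht (by omega) (by omega)
  have hΓ : 0 < Real.Gamma (1 - α) := Real.Gamma_pos_of_pos (by linarith)
  rw [L1kernel_sub_eq hk]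
  refine mul_pos (one_div_pos.mpr (by nlinarith)) ?_
  exact intervalIntegral_pos_of_pos_on (intervalIntegrable_sub_rpow_neg hα1 _ _ _)
    (fun s hs => Real.rpow_pos_of_pos (by linarith [hs.2]) _) hτ

lemma L1kernel_succ_sub_le (hα0 : 0 ≤ α) (hα1 : α < 1) (ht : StrictMonoOn t (Set.Iic N))
    (hk : k ≤ m) (hm : m + 1 < N) :
    L1kernel α t (m + 1) (m + 1 - k) ≤ L1kernel α t m (m - k) := by
  have hτ : t k < t (k + 1) := mesh_lt ht (Nat.lt_succ_self k) (by omega)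
  have htop : t (k + 1) ≤ t (m + 1) := mesh_le ht (by omega) (by omega)
  have hstep : t (m + 1) < t (m + 2) := mesh_lt ht (by omega) (by omega)
  have hΓ : 0 < Real.Gamma (1 - α) := Real.Gamma_pos_of_pos (by linarith)
  rw [L1kernel_sub_eq hk, L1kernel_sub_eq (by omega)]
  refine mul_le_mul_of_nonneg_left ?_ (one_div_nonneg.mpr (by nlinarith))
  refine integral_mono_on_of_le_Ioo hτ.le
    (intervalIntegrable_sub_rpow_neg hα1 _ _ _) (intervalIntegrable_sub_rpow_neg hα1 _ _ _)
    fun s hs => ?_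
  exact Real.rpow_le_rpow_of_nonpos (by linarith [hs.2]) (by linarith) (by linarith)

lemma L1kernel_ratio_antitoneOn (hα0 : 0 ≤ α) (hα1 : α < 1) (ht : StrictMonoOn t (Set.Iic N))
    (hmn : m ≤ n) (hn : n < N) :
    AntitoneOn (fun j => L1kernel α t n (n - j) / L1kernel α t m (m - j)) (Set.Iic m) := by
  refine antitoneOn_of_succ_le Set.ordConnected_Iic fun j _ _ hj => ?_
  simp only [Order.succ_eq_add_one, Set.mem_Iic] at hj ⊢
  rw [div_le_div_iff₀ (L1kernel_sub_pos hα1 ht hj (by omega))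
    (L1kernel_sub_pos hα1 ht (by omega) (by omega))]
  rw [L1kernel_sub_eq hj, L1kernel_sub_eq (by omega), L1kernel_sub_eq (by omega),
    L1kernel_sub_eq (by omega)]
  have hΓ : 0 < Real.Gamma (1 - α) := Real.Gamma_pos_of_pos (by linarith)
  have hτ₀ : t j < t (j + 1) := mesh_lt ht (by omega) (by omega)
  have hτ₁ : t (j + 1) < t (j + 1 + 1) := mesh_lt ht (by omega) (by omega)
  have hc : 0 ≤ 1 / (Real.Gamma (1 - α) * (t (j + 1) - t j)) *
      (1 / (Real.Gamma (1 - α) * (t (j + 1 + 1) - t (j + 1)))) := by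
    rw [one_div_mul_one_div]
    exact one_div_nonneg.mpr (mul_nonneg (by nlinarith) (by nlinarith))
  have hcells := integral_sub_rpow_neg_mul_le hα0 hα1 hτ₀.le hτ₁.le
    (mesh_le ht (show j + 1 + 1 ≤ m + 1 by omega) (by omega))
    (mesh_le ht (show m + 1 ≤ n + 1 by omega) (by omega))
  linarith [mul_le_mul_of_nonneg_left hcells hc]

end L1kernelProperties

theorem stmt7_general (α : ℝ) (hα0 : 0 < α) (hα1 : α < 1)
    (N : ℕ) (hN : 1 ≤ N) (t : ℕ → ℝ)
    (hmono : ∀ n, n < N → t n < t (n + 1))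
    (θ p : ℕ → ℕ → ℝ)
    (hθ0 : ∀ n, θ n n = 1 / L1kernel α t n 0)
    (hθ : ∀ n k, k < n → θ n k =
      -(1 / L1kernel α t k 0) * ∑ j ∈ Finset.Icc (k + 1) n, θ n j * L1kernel α t j (j - k))
    (hp : ∀ n k, p n k = ∑ j ∈ Finset.Icc k n, θ j k)
    (n : ℕ) (hn : n ≤ N - 1) (ψ : ℕ → ℝ) :
    L1kernel α t n 0 * (ψ n) ^ 2
      + ∑ k ∈ Finset.range (n + 1),
          p n k * (∑ j ∈ Finset.range (k + 1), L1kernel α t k (k - j) * ψ j) ^ 2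
      - ∑ k ∈ Finset.range n,
          p (n - 1) k * (∑ j ∈ Finset.range (k + 1), L1kernel α t k (k - j) * ψ j) ^ 2
      ≤ 2 * ψ n * ∑ k ∈ Finset.range (n + 1), L1kernel α t n (n - k) * ψ k := by
  have ht : StrictMonoOn t (Set.Iic N) := strictMonoOn_Iic_of_lt_succ hmono
  have hpos : ∀ m k, k ≤ m → m ≤ N - 1 → 0 < L1kernel α t m (m - k) :=
    fun m k hk hm => L1kernel_sub_pos hα1 ht hk (by omega)
  have hinv : IsTriangularLeftInverse (N - 1) θ fun m k => L1kernel α t m (m - k) :=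
    isTriangularLeftInverse_of_recursion (fun k hk => (hpos k k le_rfl hk).ne')
      (fun n => by simpa using hθ0 n) (fun n k hk => by simpa using hθ n k hk)
  have hθneg := hinv.nonpos_of_antitoneOn_ratio hpos
    fun m hm => L1kernel_ratio_antitoneOn hα0.le hα1 ht (Nat.le_succ m) (by omega)
  have hrow := hinv.rowSum_nonneg hpos
    fun m k hk hm => L1kernel_succ_sub_le hα0.le hα1 ht hk (by omega)
  simpa using hinv.quadratic_le hn (hpos n n le_rfl hn) (hθneg n hn) (hrow n hn) hp ψ

/-- The quadratic lower-bound inequality of the L1 kernels and their DCC kernels: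
for any real sequence `ψ⁰, …, ψⁿ`,
`2 ψⁿ Σ_{k≤n} a^{(n)}_{n-k} ψᵏ ≥ a^{(n)}_0 |ψⁿ|² + Σ_{k≤n} p^{(n)}_{n-k} (Lᵏ)² -
 Σ_{k≤n-1} p^{(n-1)}_{n-1-k} (Lᵏ)²` where `Lᵏ = Σ_{j≤k} a^{(k)}_{k-j} ψʲ`.
Here `θ n k = θ^{(n)}_{n-k}` are the DOC kernels and `p n k = p^{(n)}_{n-k}` the DCC kernels. -/
theorem stmt7 (α T : ℝ) (hα0 : 0 < α) (hα1 : α < 1)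
    (N : ℕ) (hN : 1 ≤ N) (t : ℕ → ℝ)
    (ht0 : t 0 = 0) (htT : t N = T)
    (hmono : ∀ n, n < N → t n < t (n + 1))
    (θ p : ℕ → ℕ → ℝ)
    (hθ0 : ∀ n, θ n n = 1 / L1kernel α t n 0)
    (hθ : ∀ n k, k < n → θ n k =
      -(1 / L1kernel α t k 0) * ∑ j ∈ Finset.Icc (k + 1) n, θ n j * L1kernel α t j (j - k))
    (hp : ∀ n k, p n k = ∑ j ∈ Finset.Icc k n, θ j k)
    (n : ℕ) (hn : n ≤ N - 1) (ψ : ℕ → ℝ) :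
    L1kernel α t n 0 * (ψ n) ^ 2
      + ∑ k ∈ Finset.range (n + 1),
          p n k * (∑ j ∈ Finset.range (k + 1), L1kernel α t k (k - j) * ψ j) ^ 2
      - ∑ k ∈ Finset.range n,
          p (n - 1) k * (∑ j ∈ Finset.range (k + 1), L1kernel α t k (k - j) * ψ j) ^ 2
      ≤ 2 * ψ n * ∑ k ∈ Finset.range (n + 1), L1kernel α t n (n - k) * ψ k :=
  stmt7_general α hα0 hα1 N hN t hmono θ p hθ0 hθ hp n hn ψ
end

section
/- Let 0 < α < 1, let 0 = t_0 < ⋯ < t_N = T be a temporal mesh with step sizes τ_n, and let {B^{(n)}_k : 0 ≤ k ≤ n ≤ N−1} be discrete kernels satisfying: (A1) B^{(n)}_0 ≥ B^{(n)}_1 ≥ ⋯ ≥ B^{(n)}_n > 0 for each n; (A2) there is a constant π_B > 0 with B^{(n)}_{n−k} ≥ (1/(π_B τ_{k+1})) ∫_{t_k}^{t_{k+1}} (t_{n+1} − s)^{−α}/Γ(1−α) ds for all 0 ≤ k ≤ n. Then the DCC kernels p̃^{(n)}_{n−k} associated with B satisfy 0 ≤ p̃^{(n)}_{n−k} ≤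 π_B Γ(2−α) τ_{k+1}^α for all 0 ≤ k ≤ n ≤ N−1. -/
/-!
Swapping the order of summation and using the orthogonality
`∑_{j=k}^n θ̃^{(n)}_{n-j} B^{(j)}_{j-k} = δ_{nk}` of the DOC kernels gives the identity
`∑_{j=k}^n p̃^{(n)}_{n-j} B^{(j)}_{j-k} = 1`. Subtracting it at `k` and `k + 1` yields
`p̃^{(n)}_{n-k} B^{(k)}_0 = ∑_{j>k} p̃^{(n)}_{n-j} (B^{(j)}_{j-k-1} - B^{(j)}_{j-k})`, so the
monotonicity (A1) gives `p̃ ≥ 0` by downward induction on `k`, and then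
`p̃^{(n)}_{n-k} ≤ 1 / B^{(k)}_0`.
Finally (A2) with `k = n` evaluates to `B^{(k)}_0 ≥ 1 / (π_B Γ(2-α) τ_{k+1}^α)`.
-/

open Finset

structure IsDOCKernels (B θ : ℕ → ℕ → ℝ) : Prop where
  diag : ∀ n, θ n n = 1 / B n 0
  eq_of_lt : ∀ n k, k < n →
    θ n k = -(1 / B k 0) * ∑ j ∈ Icc (k + 1) n, θ n j * B j (j - k)

def dcc (θ : ℕ → ℕ → ℝ) (n k : ℕ) : ℝ := ∑ j ∈ Icc k n, θ j k

lemma pos_of_pos_of_succ_le {b : ℕ → ℝ} {j : ℕ} (hpos : 0 < b j)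
    (hanti : ∀ i < j, b (i + 1) ≤ b i) {i : ℕ} (hi : i ≤ j) : 0 < b i := by
  induction hi using Nat.decreasingInduction with
  | self => exact hpos
  | of_succ i hi ih => exact ih.trans_le (hanti i hi)

namespace IsDOCKernels

variable {B θ : ℕ → ℕ → ℝ}

theorem sum_mul_eq_ite (h : IsDOCKernels B θ) {n k : ℕ} (hk : k ≤ n) (hB : B k 0 ≠ 0) :
    ∑ j ∈ Icc k n, θ n j * B j (j - k) = if k = n then 1 else 0 := by
  rcases hk.eq_or_lt with rfl | hlt
  · simp [h.diag, hB]
  · rw [if_neg hlt.ne, ← add_sum_Ioc_eq_sum_Icc hk, ← Icc_add_one_left_eq_Ioc, Nat.sub_self,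
      h.eq_of_lt n k hlt]
    field_simp
    ring

theorem sum_dcc_mul (h : IsDOCKernels B θ) {n k : ℕ} (hk : k ≤ n) (hB : B k 0 ≠ 0) :
    ∑ j ∈ Icc k n, dcc θ n j * B j (j - k) = 1 := by
  calc ∑ j ∈ Icc k n, dcc θ n j * B j (j - k)
      = ∑ j ∈ Icc k n, ∑ m ∈ Icc j n, θ m j * B j (j - k) := by simp only [dcc, sum_mul]
    _ = ∑ m ∈ Icc k n, ∑ j ∈ Icc k m, θ m j * B j (j - k) :=
        sum_comm' fun j m ↦ by simp only [mem_Icc]; omega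
    _ = ∑ m ∈ Icc k n, if k = m then 1 else 0 :=
        sum_congr rfl fun m hm ↦ h.sum_mul_eq_ite (mem_Icc.mp hm).1 hB
    _ = 1 := by simp [hk]

theorem dcc_mul_kernel_zero (h : IsDOCKernels B θ) {n k : ℕ} (hk : k ≤ n) (hB : B k 0 ≠ 0) :
    dcc θ n k * B k 0 = 1 - ∑ j ∈ Icc (k + 1) n, dcc θ n j * B j (j - k) := by
  rw [← h.sum_dcc_mul hk hB, ← add_sum_Ioc_eq_sum_Icc hk, ← Icc_add_one_left_eq_Ioc,
    Nat.sub_self, add_sub_cancel_right]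

theorem dcc_nonneg (h : IsDOCKernels B θ) {n : ℕ} (hB : ∀ j ≤ n, 0 < B j 0)
    (hanti : ∀ j ≤ n, ∀ i < j, B j (i + 1) ≤ B j i) {k : ℕ} (hk : k ≤ n) :
    0 ≤ dcc θ n k := by
  suffices ∀ j ∈ Icc k n, 0 ≤ dcc θ n j from this k (mem_Icc.mpr ⟨le_rfl, hk⟩)
  induction hk using Nat.decreasingInduction with
  | self =>
    intro j hj
    obtain rfl : j = n := by simp only [mem_Icc] at hj; omega
    have := hB j le_rfl
    simp only [dcc, Icc_self, sum_singleton, h.diag]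
    positivity
  | of_succ k hk ih =>
    intro j hj
    rcases (mem_Icc.mp hj).1.eq_or_lt with rfl | hkj
    · have hBk := hB k hk.le
      have hsum : 0 ≤ ∑ i ∈ Icc (k + 1) n, dcc θ n i * (B i (i - (k + 1)) - B i (i - k)) := by
        refine sum_nonneg fun i hi ↦ mul_nonneg (ih i hi) (sub_nonneg.mpr ?_)
        obtain ⟨hki, hin⟩ := mem_Icc.mp hi
        have := hanti i hin (i - (k + 1)) (by omega)
        rwa [show i - (k + 1) + 1 = i - k by omega] at this
      have hmul : 0 ≤ dcc θ n k * B k 0 := by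
        rw [h.dcc_mul_kernel_zero hk.le hBk.ne', ← h.sum_dcc_mul hk (hB _ hk).ne']
        simpa only [mul_sub, sum_sub_distrib] using hsum
      exact nonneg_of_mul_nonneg_left hmul hBk
    · exact ih j (mem_Icc.mpr ⟨hkj, (mem_Icc.mp hj).2⟩)

theorem dcc_le_one_div (h : IsDOCKernels B θ) {n : ℕ} (hpos : ∀ j ≤ n, ∀ i ≤ j, 0 < B j i)
    (hanti : ∀ j ≤ n, ∀ i < j, B j (i + 1) ≤ B j i) {k : ℕ} (hk : k ≤ n) :
    dcc θ n k ≤ 1 / B k 0 := by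
  have hBk := hpos k hk 0 k.zero_le
  have hrest : 0 ≤ ∑ j ∈ Icc (k + 1) n, dcc θ n j * B j (j - k) := by
    refine sum_nonneg fun j hj ↦ ?_
    obtain ⟨hkj, hjn⟩ := mem_Icc.mp hj
    exact mul_nonneg (h.dcc_nonneg (fun i hi ↦ hpos i hi 0 i.zero_le) hanti hjn)
      (hpos j hjn _ (j.sub_le k)).le
  rw [le_div_iff₀ hBk, h.dcc_mul_kernel_zero hk hBk.ne']
  linarith

end IsDOCKernels

open Real in
theorem integral_sub_rpow_neg_div_Gamma {α a b : ℝ} (hα : α < 1) :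
    ∫ s in a..b, (b - s) ^ (-α) / Gamma (1 - α) = (b - a) ^ (1 - α) / Gamma (2 - α) := by
  have hΓ : Gamma (2 - α) = (1 - α) * Gamma (1 - α) := by
    rw [show 2 - α = (1 - α) + 1 by ring, Gamma_add_one (by linarith)]
  rw [intervalIntegral.integral_div, intervalIntegral.integral_comp_sub_left (· ^ (-α)),
    sub_self, integral_rpow (Or.inl (by linarith)), zero_rpow (by linarith), hΓ,
    show -α + 1 = 1 - α by ring, div_div, sub_zero]

open Real in
theorem one_div_mul_integral_sub_rpow_neg_div_Gamma {α a b : ℝ} (c : ℝ) (hα : α < 1)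
    (hab : a < b) :
    1 / (c * (b - a)) * ∫ s in a..b, (b - s) ^ (-α) / Gamma (1 - α)
      = 1 / (c * Gamma (2 - α) * (b - a) ^ α) := by
  have hτ : 0 < b - a := sub_pos.mpr hab
  rw [integral_sub_rpow_neg_div_Gamma hα, rpow_sub hτ, rpow_one]
  field_simp

theorem stmt10_general (α πB : ℝ) (hα1 : α < 1) (hπB : 0 < πB)
    (N : ℕ) (hN : 1 ≤ N) (t : ℕ → ℝ)
    (hmono : ∀ n, n < N → t n < t (n + 1))
    (B : ℕ → ℕ → ℝ)
    (hA1pos : ∀ n, n ≤ N - 1 → 0 < B n n)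
    (hA1mono : ∀ n, n ≤ N - 1 → ∀ j, j < n → B n (j + 1) ≤ B n j)
    (hA2 : ∀ n, n ≤ N - 1 → ∀ k, k ≤ n →
      (1 / (πB * (t (k + 1) - t k))) *
          ∫ s in (t k)..(t (k + 1)), (t (n + 1) - s) ^ (-α) / Real.Gamma (1 - α)
        ≤ B n (n - k))
    (θ p : ℕ → ℕ → ℝ)
    (hθ0 : ∀ n, θ n n = 1 / B n 0)
    (hθ : ∀ n k, k < n →
      θ n k = -(1 / B k 0) * ∑ j ∈ Finset.Icc (k + 1) n, θ n j * B j (j - k))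
    (hp : ∀ n k, p n k = ∑ j ∈ Finset.Icc k n, θ j k) :
    ∀ n, n ≤ N - 1 → ∀ k, k ≤ n →
      0 ≤ p n k ∧ p n k ≤ πB * Real.Gamma (2 - α) * (t (k + 1) - t k) ^ α := by
  obtain rfl : p = dcc θ := funext₂ hp
  have hdoc : IsDOCKernels B θ := ⟨hθ0, hθ⟩
  intro n hn k hk
  have hpos : ∀ j ≤ n, ∀ i ≤ j, 0 < B j i := fun j hj _ ↦
    pos_of_pos_of_succ_le (hA1pos j (hj.trans hn)) (hA1mono j (hj.trans hn))
  have hanti : ∀ j ≤ n, ∀ i < j, B j (i + 1) ≤ B j i := fun j hj ↦ hA1mono j (hj.trans hn)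
  have hτ : t k < t (k + 1) := hmono k (by omega)
  have hBk : 1 / (πB * Real.Gamma (2 - α) * (t (k + 1) - t k) ^ α) ≤ B k 0 := by
    simpa only [one_div_mul_integral_sub_rpow_neg_div_Gamma πB hα1 hτ, Nat.sub_self]
      using hA2 k (hk.trans hn) k le_rfl
  have hc : 0 < πB * Real.Gamma (2 - α) * (t (k + 1) - t k) ^ α := by
    have := Real.Gamma_pos_of_pos (show 0 < 2 - α by linarith)
    have := Real.rpow_pos_of_pos (sub_pos.mpr hτ) α
    positivity
  refine ⟨hdoc.dcc_nonneg (fun j hj ↦ hpos j hj 0 j.zero_le) hanti hk, ?_⟩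
  exact (hdoc.dcc_le_one_div hpos hanti hk).trans
    ((one_div_le (hpos k hk 0 k.zero_le) hc).mpr hBk)

/-- Bounds on the DCC kernels of discrete kernels `B` satisfying assumptions A1 and A2.
Here `B n j = B^{(n)}_j` (lag-indexed), `θ n k = θ̃^{(n)}_{n-k}` are the DOC kernels and
`p n k = p̃^{(n)}_{n-k}` are the DCC kernels: under A1 (monotone positive kernels) and
A2 (lower bound by the weakly singular kernel averages, with constant `π_B`), it holds
that `0 ≤ p̃^{(n)}_{n-k} ≤ π_B Γ(2-α) τ_{k+1}^α`. -/
theorem stmt10 (α T πB : ℝ) (hα0 : 0 < α) (hα1 : α < 1) (hπB : 0 < πB)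
    (N : ℕ) (hN : 1 ≤ N) (t : ℕ → ℝ)
    (ht0 : t 0 = 0) (htT : t N = T)
    (hmono : ∀ n, n < N → t n < t (n + 1))
    (B : ℕ → ℕ → ℝ)
    (hA1pos : ∀ n, n ≤ N - 1 → 0 < B n n)
    (hA1mono : ∀ n, n ≤ N - 1 → ∀ j, j < n → B n (j + 1) ≤ B n j)
    (hA2 : ∀ n, n ≤ N - 1 → ∀ k, k ≤ n →
      (1 / (πB * (t (k + 1) - t k))) *
          ∫ s in (t k)..(t (k + 1)), (t (n + 1) - s) ^ (-α) / Real.Gamma (1 - α)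
        ≤ B n (n - k))
    (θ p : ℕ → ℕ → ℝ)
    (hθ0 : ∀ n, θ n n = 1 / B n 0)
    (hθ : ∀ n k, k < n →
      θ n k = -(1 / B k 0) * ∑ j ∈ Finset.Icc (k + 1) n, θ n j * B j (j - k))
    (hp : ∀ n k, p n k = ∑ j ∈ Finset.Icc k n, θ j k) :
    ∀ n, n ≤ N - 1 → ∀ k, k ≤ n →
      0 ≤ p n k ∧ p n k ≤ πB * Real.Gamma (2 - α) * (t (k + 1) - t k) ^ α :=
  stmt10_general α πB hα1 hπB N hN t hmono B hA1pos hA1mono hA2 θ p hθ0 hθ hp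
end

section
/- Let M ≥ 2, h > 0, ε > 0, κ ≥ 2, and let D_h = I_M ⊗ G + G ⊗ I_M be the discrete Laplacian matrix built from the M×M tridiagonal matrix G with G_{11} = G_{MM} = −1/h², G_{ii} = −2/h² (2 ≤ i ≤ M−1), G_{i,i+1} = G_{i+1,i} = 1/h². Let F(x) = ¼(x²−1)², f_κ(x) = x³ − (1+κ)x, and define E_h(Φ) = −(h²ε²/2) Φᵀ D_h Φ + h² Σ_{i=1}^{M²} F(Φ_i) for Φ ∈ ℝ^{M²}. Then for all U, V ∈ ℝ^{M²} whose entries all lie in [−1,1]: E_h(U) − E_h(V) ≤ h² (U−V)ᵀ( κU − ε² D_h U + f_κ(V) ) + (ε²h²/2) (U−V)ᵀ D_h (U−V) − (κh²/2) Σ_{i=1}^{M²} (U_i − V_i)², where f_κ is applied entrywise. -/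
open Matrix

/-- The discrete free energy `E_h(Φ) = -(h²ε²/2) Φᵀ D_h Φ + h² Σ_i F(Φ_i)` with
`F(x) = ¼(x²-1)²`. -/
noncomputable def Eh (M : ℕ) (h ε : ℝ) (Φ : Fin M × Fin M → ℝ) : ℝ :=
  -(h ^ 2 * ε ^ 2 / 2) * (Φ ⬝ᵥ (Dh M h).mulVec Φ) +
    h ^ 2 * ∑ i, (1 / 4) * ((Φ i) ^ 2 - 1) ^ 2

/-!
The quadratic part of `E_h` is handled exactly: since `D_h` is symmetric,
`UᵀDU - VᵀDV = 2(U-V)ᵀDU - (U-V)ᵀD(U-V)`. The double-well part is handled entrywise: on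
`[-1,1]` the derivative `f' = 3x² - 1` of `f = F'` is at most `2`, so
`F(u) - F(v) ≤ f(v)(u-v) + (u-v)²`, and `κ ≥ 2` absorbs the quadratic remainder.
-/

theorem Matrix.IsSymm.kroneckerMap {m n α β γ : Type*} (f : α → β → γ)
    {A : Matrix m m α} {B : Matrix n n β} (hA : A.IsSymm) (hB : B.IsSymm) :
    (kroneckerMap f A B).IsSymm := by
  rw [IsSymm, ← kroneckerMap_transpose, hA.eq, hB.eq]

theorem Matrix.IsSymm.dotProduct_mulVec_sub {n R : Type*} [Fintype n] [CommRing R]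
    {A : Matrix n n R} (hA : A.IsSymm) (x y : n → R) :
    x ⬝ᵥ A *ᵥ x - y ⬝ᵥ A *ᵥ y = 2 * ((x - y) ⬝ᵥ A *ᵥ x) - (x - y) ⬝ᵥ A *ᵥ (x - y) := by
  have hyx : y ⬝ᵥ A *ᵥ x = x ⬝ᵥ A *ᵥ y := by
    rw [dotProduct_mulVec, ← mulVec_transpose, hA.eq, dotProduct_comm]
  simp only [mulVec_sub, sub_dotProduct, dotProduct_sub, hyx]
  ring

theorem Gmat_isSymm (M : ℕ) (h : ℝ) : (Gmat M h).IsSymm :=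
  IsSymm.ext fun i j => by
    simp only [Gmat, of_apply]
    split_ifs <;> first | rfl | omega

theorem Dh_isSymm (M : ℕ) (h : ℝ) : (Dh M h).IsSymm :=
  (isSymm_one.kroneckerMap _ (Gmat_isSymm M h)).add
    ((Gmat_isSymm M h).kroneckerMap _ isSymm_one)

theorem doubleWell_sub_le {u v : ℝ} (hu : u ∈ Set.Icc (-1 : ℝ) 1) (hv : v ∈ Set.Icc (-1 : ℝ) 1) :
    1 / 4 * (u ^ 2 - 1) ^ 2 - 1 / 4 * (v ^ 2 - 1) ^ 2 ≤ (u - v) * (v ^ 3 - v) + (u - v) ^ 2 := by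
  obtain ⟨hu₁, hu₂⟩ := hu
  obtain ⟨hv₁, hv₂⟩ := hv
  -- the left side minus the right side equals `(u - v)² · (((u + v)/2)² + v²/2 - 3/2)`
  have hremainder : ((u + v) / 2) ^ 2 + v ^ 2 / 2 - 3 / 2 ≤ 0 := by nlinarith
  nlinarith [mul_nonpos_of_nonneg_of_nonpos (sq_nonneg (u - v)) hremainder]

theorem sum_doubleWell_sub_le {ι : Type*} [Fintype ι] {κ : ℝ} (hκ : 2 ≤ κ) {U V : ι → ℝ}
    (hU : ∀ i, U i ∈ Set.Icc (-1 : ℝ) 1) (hV : ∀ i, V i ∈ Set.Icc (-1 : ℝ) 1) :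
    ∑ i, 1 / 4 * (U i ^ 2 - 1) ^ 2 - ∑ i, 1 / 4 * (V i ^ 2 - 1) ^ 2 ≤
      (U - V) ⬝ᵥ (κ • U + fun i => V i ^ 3 - (1 + κ) * V i) - κ / 2 * ∑ i, (U i - V i) ^ 2 := by
  simp only [dotProduct, Pi.sub_apply, Pi.add_apply, Pi.smul_apply, smul_eq_mul, Finset.mul_sum,
    ← Finset.sum_sub_distrib]
  refine Finset.sum_le_sum fun i _ => (doubleWell_sub_le (hU i) (hV i)).trans ?_
  nlinarith [sq_nonneg (U i - V i)]

theorem stmt15_general (M : ℕ) (h ε κ : ℝ) (hκ : 2 ≤ κ)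
    (U V : Fin M × Fin M → ℝ)
    (hU : ∀ i, U i ∈ Set.Icc (-1 : ℝ) 1) (hV : ∀ i, V i ∈ Set.Icc (-1 : ℝ) 1) :
    Eh M h ε U - Eh M h ε V ≤
      h ^ 2 * ((U - V) ⬝ᵥ
          (κ • U - ε ^ 2 • (Dh M h).mulVec U + fun i => (V i) ^ 3 - (1 + κ) * V i))
        + (ε ^ 2 * h ^ 2 / 2) * ((U - V) ⬝ᵥ (Dh M h).mulVec (U - V))
        - (κ * h ^ 2 / 2) * ∑ i, (U i - V i) ^ 2 := by
  have hquad := (Dh_isSymm M h).dotProduct_mulVec_sub U V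
  have hwell := mul_le_mul_of_nonneg_left (sum_doubleWell_sub_le hκ hU hV) (sq_nonneg h)
  have hsplit : κ • U - ε ^ 2 • (Dh M h).mulVec U + (fun i => V i ^ 3 - (1 + κ) * V i) =
      (κ • U + fun i => V i ^ 3 - (1 + κ) * V i) - ε ^ 2 • (Dh M h).mulVec U := by abel
  rw [hsplit, dotProduct_sub, dotProduct_smul, smul_eq_mul]
  unfold Eh
  linear_combination hwell - h ^ 2 * ε ^ 2 / 2 * hquad

/-- Discrete energy difference estimate: for all `U, V ∈ ℝ^{M²}` with entries in `[-1,1]`,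
`E_h(U) - E_h(V) ≤ h² (U-V)ᵀ(κU - ε²D_hU + f_κ(V)) + (ε²h²/2)(U-V)ᵀD_h(U-V)
 - (κh²/2) Σ_i (U_i - V_i)²`, where `f_κ(x) = x³ - (1+κ)x` acts entrywise. -/
theorem stmt15 (M : ℕ) (hM : 2 ≤ M) (h ε κ : ℝ) (hh : 0 < h) (hε : 0 < ε) (hκ : 2 ≤ κ)
    (U V : Fin M × Fin M → ℝ)
    (hU : ∀ i, U i ∈ Set.Icc (-1 : ℝ) 1) (hV : ∀ i, V i ∈ Set.Icc (-1 : ℝ) 1) :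
    Eh M h ε U - Eh M h ε V ≤
      h ^ 2 * ((U - V) ⬝ᵥ
          (κ • U - ε ^ 2 • (Dh M h).mulVec U + fun i => (V i) ^ 3 - (1 + κ) * V i))
        + (ε ^ 2 * h ^ 2 / 2) * ((U - V) ⬝ᵥ (Dh M h).mulVec (U - V))
        - (κ * h ^ 2 / 2) * ∑ i, (U i - V i) ^ 2 :=
  stmt15_general M h ε κ hκ U V hU hV
end
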